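/- For every ρ ∈ [0,1], every B ≥ 0, every expert strategy x^π with x^π_v ∈ U for each v, and every sequence of RL suggestions x̃_1, …, x̃_T with x̃_v ∈ U ∪ {skip}, the strategy x produced by LOMAR's free-disposal switching rule has total reward satisfying R_T ≥ ρ·R^π_T − B. -/

import Mathlib

/-- `Vset x u v` = `V_{u,v}`: the set of online items among steps `1, …, v`
that strategy `x` matches to offline item `u`. -/
def Vset {U : Type*} [DecidableEq U] (x : ℕ → Option U) (u : U) (v : ℕ) : Finset ℕ :=
  (Finset.Icc 1 v).filter fun v' => x v' = some u

/-- `fRew cu wt S` = `f_u(S)`: the reward collected at an offline item of capacity `cu`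
in the free-disposal model, i.e. the maximum over subsets `E ⊆ S` with `|E| ≤ cu` of
`Σ_{v'∈E} wt v'`. -/
noncomputable def fRew (cu : ℕ) (wt : ℕ → ℝ) (S : Finset ℕ) : ℝ :=
  sSup {x | ∃ E ⊆ S, E.card ≤ cu ∧ x = ∑ v' ∈ E, wt v'}

/-- `topList cu wt S`: the rewards of a maximum-reward subset of `S` of size `≤ cu`
(i.e. the top `cu` rewards), sorted increasingly and padded with zeros to length `cu`;
its `j`-th entry (0-indexed) is `e_{u,j+1}(S)`. -/
noncomputable def topList (cu : ℕ) (wt : ℕ → ℝ) (S : Finset ℕ) : List ℝ :=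
  let l := (S.val.map wt).sort (· ≤ ·)
  List.replicate (cu - l.length) 0 ++ l.drop (l.length - cu)

/-- The hedging term
`G̃((V_u),(V^π_u)) = Σ_{u∈U} ( max_{1≤i≤c(u)} Σ_{j=1}^{i} (e_{u,j}(V_u) − e_{u,j}(V^π_u)) )⁺`. -/
noncomputable def hedgeSum {U : Type*} [Fintype U] (c : U → ℕ) (w : U → ℕ → ℝ)
    (V Vπ : U → Finset ℕ) : ℝ :=
  ∑ u : U, max (sSup ((fun i => ∑ j ∈ Finset.range i,
      ((topList (c u) (w u) (V u)).getD j 0 - (topList (c u) (w u) (Vπ u)).getD j 0)) ''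
    Set.Icc 1 (c u))) 0

/-- `totalRew c w x v` = `R_v = Σ_{u∈U} f_u(V_{u,v})`: the cumulative reward of
strategy `x` after step `v` in the free-disposal model. -/
noncomputable def totalRew {U : Type*} [Fintype U] [DecidableEq U] (c : U → ℕ)
    (w : U → ℕ → ℝ) (x : ℕ → Option U) (v : ℕ) : ℝ :=
  ∑ u : U, fRew (c u) (w u) (Vset x u v)

/-- LOMAR's free-disposal switching condition at step `v`: the RL suggestion `x̃_v`
may be followed iff `R_{v−1} + Δf_{x̃_v} ≥ ρ·(R^π_v + G_v) − B`, where `Δf_{x̃_v}` is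
the marginal reward of the RL decision and `G_v` is the hedging term computed with
LOMAR's sets updated by the RL decision and the expert's sets after step `v`. -/
noncomputable def fdCond {U : Type*} [Fintype U] [DecidableEq U] (c : U → ℕ)
    (w : U → ℕ → ℝ) (ρ B : ℝ) (xπ : ℕ → U) (x xt : ℕ → Option U) (v : ℕ) : Prop :=
  totalRew c w x (v - 1) +
    ((xt v).elim (0 : ℝ) fun u =>
      fRew (c u) (w u) (insert v (Vset x u (v - 1))) - fRew (c u) (w u) (Vset x u (v - 1))) ≥
  ρ * (totalRew c w (fun v' => some (xπ v')) v +
    hedgeSum c w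
      (fun u => if xt v = some u then insert v (Vset x u (v - 1)) else Vset x u (v - 1))
      (fun u => Vset (fun v' => some (xπ v')) u v)) - B

/-!
Write `f_k` for the best reward of at most `k` items and `D_k = f_k(V_u) - f_k(V^π_u)`. The
prefix sums of the sorted top-`c` list are `f_c - f_{c-i}`, so the hedging term at `u` is
`D_c - min_{k ≤ c} D_k`. LOMAR keeps the invariant `R_v ≥ ρ (R^π_v + G_v) - B`, where `G_v` is
the hedge between its sets and the expert's: following the RL suggestion is allowed exactly when
the invariant survives the step. When LOMAR copies the expert instead, both add the same online
item to the same offline item, and `f_k(S ∪ {v}) = max (f_k S) (f_{k-1} S + w v)` shows that each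
new `D_k` is at least `min D_k D_{k-1}`. Hence `min_k D_k` does not decrease, so the expert's gain
plus the growth of the hedge is at most LOMAR's gain, which is nonnegative. Finally `G_T ≥ 0`.
-/

section TopRewards

variable (k : ℕ) (wt : ℕ → ℝ) (S : Finset ℕ)

theorem fRew_isGreatest :
    IsGreatest {x | ∃ E ⊆ S, E.card ≤ k ∧ x = ∑ v' ∈ E, wt v'} (fRew k wt S) := by
  have hfin : {x | ∃ E ⊆ S, E.card ≤ k ∧ x = ∑ v' ∈ E, wt v'}.Finite :=
    (S.powerset.finite_toSet.image fun E => ∑ v' ∈ E, wt v').subset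
      fun _ ⟨E, hES, _, hx⟩ => ⟨E, Finset.mem_powerset.mpr hES, hx.symm⟩
  have hne : {x | ∃ E ⊆ S, E.card ≤ k ∧ x = ∑ v' ∈ E, wt v'}.Nonempty :=
    ⟨0, ∅, Finset.empty_subset S, Nat.zero_le k, Finset.sum_empty.symm⟩
  exact ⟨hne.csSup_mem hfin, fun _ hx => le_csSup hfin.bddAbove hx⟩

variable {k wt S}

theorem sum_le_fRew {E : Finset ℕ} (hES : E ⊆ S) (hE : E.card ≤ k) :
    ∑ v' ∈ E, wt v' ≤ fRew k wt S :=
  (fRew_isGreatest k wt S).2 ⟨E, hES, hE, rfl⟩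

theorem exists_sum_eq_fRew : ∃ E ⊆ S, E.card ≤ k ∧ fRew k wt S = ∑ v' ∈ E, wt v' :=
  (fRew_isGreatest k wt S).1

variable (k wt S)

theorem fRew_nonneg : 0 ≤ fRew k wt S := by
  simpa using sum_le_fRew (wt := wt) (Finset.empty_subset S) (Nat.zero_le k)

theorem fRew_zero : fRew 0 wt S = 0 := by
  obtain ⟨E, -, hE, hsum⟩ := exists_sum_eq_fRew (k := 0) (wt := wt) (S := S)
  rw [hsum, Finset.card_eq_zero.mp (Nat.le_zero.mp hE), Finset.sum_empty]

theorem fRew_empty : fRew k wt ∅ = 0 := by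
  obtain ⟨E, hE, -, hsum⟩ := exists_sum_eq_fRew (k := k) (wt := wt) (S := ∅)
  rw [hsum, Finset.subset_empty.mp hE, Finset.sum_empty]

variable {k S}

theorem fRew_mono {S' : Finset ℕ} (h : S ⊆ S') : fRew k wt S ≤ fRew k wt S' := by
  obtain ⟨E, hES, hE, hsum⟩ := exists_sum_eq_fRew (k := k) (wt := wt) (S := S)
  exact hsum ▸ sum_le_fRew (hES.trans h) hE

theorem fRew_insert (hk : 1 ≤ k) {v : ℕ} (hv : v ∉ S) :
    fRew k wt (insert v S) = max (fRew k wt S) (fRew (k - 1) wt S + wt v) := by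
  apply le_antisymm
  · obtain ⟨E, hES, hE, hsum⟩ := exists_sum_eq_fRew (k := k) (wt := wt) (S := insert v S)
    rw [hsum]
    by_cases hvE : v ∈ E
    · refine le_max_of_le_right ?_
      rw [← Finset.sum_erase_add E wt hvE]
      gcongr
      refine sum_le_fRew (fun y hy => ?_) (by rw [Finset.card_erase_of_mem hvE]; omega)
      exact (Finset.mem_insert.mp (hES (Finset.mem_of_mem_erase hy))).resolve_left
        (Finset.ne_of_mem_erase hy)
    · exact le_max_of_le_left (sum_le_fRew (fun y hy => (Finset.mem_insert.mp (hES hy)).resolve_left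
        (ne_of_mem_of_not_mem hy hvE)) hE)
  · refine max_le ?_ ?_
    · exact fRew_mono wt (Finset.subset_insert v S)
    · obtain ⟨E, hES, hE, hsum⟩ := exists_sum_eq_fRew (k := k - 1) (wt := wt) (S := S)
      have hvE : v ∉ E := fun h => hv (hES h)
      rw [hsum, add_comm, ← Finset.sum_insert hvE]
      exact sum_le_fRew (Finset.insert_subset_insert v hES)
        ((Finset.card_insert_le v E).trans (by omega))

end TopRewards

theorem fRew_insert_of_forall_le {k : ℕ} {wt : ℕ → ℝ} {S : Finset ℕ} {v : ℕ} (hk : 1 ≤ k)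
    (hv : v ∉ S) (hv₀ : 0 ≤ wt v) (hmax : ∀ y ∈ S, wt y ≤ wt v) :
    fRew k wt (insert v S) = fRew (k - 1) wt S + wt v := by
  rw [fRew_insert wt hk hv, max_eq_right]
  obtain ⟨E, hES, hE, hsum⟩ := exists_sum_eq_fRew (k := k) (wt := wt) (S := S)
  rw [hsum]
  obtain rfl | ⟨e, he⟩ := E.eq_empty_or_nonempty
  · simpa using add_nonneg (fRew_nonneg (k - 1) wt S) hv₀
  · -- exchange: any kept item is worth at most `wt v`
    rw [← Finset.sum_erase_add E wt he]
    gcongr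
    · exact sum_le_fRew ((Finset.erase_subset e E).trans hES)
        (by rw [Finset.card_erase_of_mem he]; omega)
    · exact hmax e (hES he)

/-- The sum of the last `k` entries of `l`, i.e. of its `k` largest ones when `l` is sorted
increasingly. -/
def topSum (k : ℕ) (l : List ℝ) : ℝ := (l.drop (l.length - k)).sum

theorem topSum_zero (l : List ℝ) : topSum 0 l = 0 := by
  simp [topSum]

theorem topSum_append_singleton {k : ℕ} (hk : 1 ≤ k) (l : List ℝ) (a : ℝ) :
    topSum k (l ++ [a]) = topSum (k - 1) l + a := by
  have hidx : (l ++ [a]).length - k = l.length - (k - 1) := by simp; omega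
  rw [topSum, topSum, hidx, List.drop_append_of_le_length (Nat.sub_le _ _), List.sum_append,
    List.sum_singleton]

noncomputable def sortedRewards (wt : ℕ → ℝ) (S : Finset ℕ) : List ℝ :=
  (S.val.map wt).sort (· ≤ ·)

theorem sortedRewards_insert_of_forall_le {wt : ℕ → ℝ} {S : Finset ℕ} {v : ℕ} (hv : v ∉ S)
    (hmax : ∀ y ∈ S, wt y ≤ wt v) :
    sortedRewards wt (insert v S) = sortedRewards wt S ++ [wt v] := by
  refine List.Perm.eq_of_pairwise' (Multiset.pairwise_sort _ _) ?_ ?_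
  · refine List.pairwise_append.mpr ⟨Multiset.pairwise_sort _ _, List.pairwise_singleton _ _,
      fun a ha b hb => ?_⟩
    obtain ⟨y, hy, rfl⟩ := Multiset.mem_map.mp ((Multiset.mem_sort _).mp ha)
    exact List.eq_of_mem_singleton hb ▸ hmax y hy
  · rw [← Multiset.coe_eq_coe, ← Multiset.coe_add, sortedRewards, sortedRewards,
      Multiset.sort_eq, Multiset.sort_eq, Finset.insert_val_of_notMem hv, Multiset.map_cons,
      Multiset.coe_singleton, add_comm, Multiset.singleton_add]

theorem fRew_eq_topSum {wt : ℕ → ℝ} (hw : ∀ m, 0 ≤ wt m) (k : ℕ) (S : Finset ℕ) :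
    fRew k wt S = topSum k (sortedRewards wt S) := by
  induction S using Finset.induction_on_max_value wt generalizing k with
  | empty => simp [fRew_empty, topSum, sortedRewards]
  | insert v S hv hmax ih =>
    rcases Nat.eq_zero_or_pos k with rfl | hk
    · rw [fRew_zero, topSum_zero]
    · rw [fRew_insert_of_forall_le hk hv (hw v) hmax, sortedRewards_insert_of_forall_le hv hmax,
        topSum_append_singleton hk, ih]

theorem sum_range_getD_eq_sum_take (l : List ℝ) (i : ℕ) :
    ∑ j ∈ Finset.range i, l.getD j 0 = (l.take i).sum := by
  induction i with
  | zero => simp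
  | succ i ih =>
    rw [Finset.sum_range_succ, ih, List.take_add_one, List.sum_append]
    cases h : l[i]? <;> simp [List.getD_eq_getElem?_getD, h]

theorem sum_take_padded_eq_topSum_sub {c i : ℕ} (hi : i ≤ c) (l : List ℝ) :
    ((List.replicate (c - l.length) 0 ++ l.drop (l.length - c)).take i).sum =
      topSum c l - topSum (c - i) l := by
  have hdrop : l.drop (l.length - (c - i)) =
      (l.drop (l.length - c)).drop (i - (c - l.length)) := by
    rw [List.drop_drop]; congr 1; omega
  rw [topSum, topSum, hdrop, List.take_append, List.take_replicate, List.sum_append,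
    List.length_replicate, List.sum_replicate, smul_zero, zero_add,
    ← List.sum_take_add_sum_drop (l.drop (l.length - c)) (i - (c - l.length))]
  ring

theorem sum_range_getD_topList (c : ℕ) {wt : ℕ → ℝ} (hw : ∀ m, 0 ≤ wt m) (S : Finset ℕ)
    {i : ℕ} (hi : i ≤ c) :
    ∑ j ∈ Finset.range i, (topList c wt S).getD j 0 = fRew c wt S - fRew (c - i) wt S := by
  rw [sum_range_getD_eq_sum_take, fRew_eq_topSum hw, fRew_eq_topSum hw]
  exact sum_take_padded_eq_topSum_sub hi (sortedRewards wt S)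

section Hedge

variable (c : ℕ) (wt : ℕ → ℝ)

noncomputable def hedge (S Sπ : Finset ℕ) : ℝ :=
  max (sSup ((fun i => ∑ j ∈ Finset.range i,
      ((topList c wt S).getD j 0 - (topList c wt Sπ).getD j 0)) '' Set.Icc 1 c)) 0

variable {c wt}

theorem hedge_nonneg (S Sπ : Finset ℕ) : 0 ≤ hedge c wt S Sπ :=
  le_max_right _ _

theorem le_hedge {S Sπ : Finset ℕ} {i : ℕ} (hi₁ : 1 ≤ i) (hi₂ : i ≤ c) :
    ∑ j ∈ Finset.range i, ((topList c wt S).getD j 0 - (topList c wt Sπ).getD j 0) ≤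
      hedge c wt S Sπ :=
  le_max_of_le_left
    (le_csSup ((Set.finite_Icc 1 c).image _).bddAbove (Set.mem_image_of_mem _ ⟨hi₁, hi₂⟩))

theorem hedge_le {S Sπ : Finset ℕ} {X : ℝ} (hX : 0 ≤ X)
    (h : ∀ i, 1 ≤ i → i ≤ c →
      ∑ j ∈ Finset.range i, ((topList c wt S).getD j 0 - (topList c wt Sπ).getD j 0) ≤ X) :
    hedge c wt S Sπ ≤ X :=
  max_le (Real.sSup_le (fun _ ⟨i, hi, hx⟩ => hx ▸ h i hi.1 hi.2) hX) hX

theorem hedge_self (S : Finset ℕ) : hedge c wt S S = 0 :=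
  le_antisymm (hedge_le le_rfl fun _ _ _ => by simp) (hedge_nonneg S S)

theorem fRew_sub_sub_hedge_le (hw : ∀ m, 0 ≤ wt m) {S Sπ : Finset ℕ} {k : ℕ} (hk : k ≤ c) :
    fRew c wt S - fRew c wt Sπ - hedge c wt S Sπ ≤ fRew k wt S - fRew k wt Sπ := by
  obtain rfl | hkc := hk.eq_or_lt
  · linarith [hedge_nonneg (c := k) (wt := wt) S Sπ]
  · have h := le_hedge (wt := wt) (S := S) (Sπ := Sπ) (i := c - k) (by omega) (Nat.sub_le c k)
    rw [Finset.sum_sub_distrib, sum_range_getD_topList c hw S (Nat.sub_le c k),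
      sum_range_getD_topList c hw Sπ (Nat.sub_le c k), Nat.sub_sub_self hk] at h
    linarith

theorem hedge_le_of_forall_le (hw : ∀ m, 0 ≤ wt m) {S Sπ : Finset ℕ} {m : ℝ}
    (h : ∀ k ≤ c, m ≤ fRew k wt S - fRew k wt Sπ) :
    hedge c wt S Sπ ≤ fRew c wt S - fRew c wt Sπ - m := by
  refine hedge_le (by linarith [h c le_rfl]) fun i _ hi => ?_
  rw [Finset.sum_sub_distrib, sum_range_getD_topList c hw S hi, sum_range_getD_topList c hw Sπ hi]
  linarith [h (c - i) (Nat.sub_le c i)]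

theorem min_le_fRew_insert_sub_fRew_insert {k : ℕ} (hk : 1 ≤ k) {S Sπ : Finset ℕ} {v : ℕ}
    (hvS : v ∉ S) (hvSπ : v ∉ Sπ) :
    min (fRew k wt S - fRew k wt Sπ) (fRew (k - 1) wt S - fRew (k - 1) wt Sπ) ≤
      fRew k wt (insert v S) - fRew k wt (insert v Sπ) := by
  rw [fRew_insert wt hk hvS, fRew_insert wt hk hvSπ]
  rcases max_cases (fRew k wt Sπ) (fRew (k - 1) wt Sπ + wt v) with ⟨h, -⟩ | ⟨h, -⟩ <;> rw [h] <;>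
    linarith [min_le_left (fRew k wt S - fRew k wt Sπ) (fRew (k - 1) wt S - fRew (k - 1) wt Sπ),
      min_le_right (fRew k wt S - fRew k wt Sπ) (fRew (k - 1) wt S - fRew (k - 1) wt Sπ),
      le_max_left (fRew k wt S) (fRew (k - 1) wt S + wt v),
      le_max_right (fRew k wt S) (fRew (k - 1) wt S + wt v)]

theorem fRew_insert_sub_add_hedge_le (hw : ∀ m, 0 ≤ wt m) {S Sπ : Finset ℕ} {v : ℕ}
    (hvS : v ∉ S) (hvSπ : v ∉ Sπ) :
    fRew c wt (insert v Sπ) - fRew c wt Sπ + hedge c wt (insert v S) (insert v Sπ) ≤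
      fRew c wt (insert v S) - fRew c wt S + hedge c wt S Sπ := by
  have hmin : ∀ k ≤ c, fRew c wt S - fRew c wt Sπ - hedge c wt S Sπ ≤
      fRew k wt (insert v S) - fRew k wt (insert v Sπ) := by
    intro k hk
    rcases Nat.eq_zero_or_pos k with rfl | hk₀
    · simpa only [fRew_zero] using fRew_sub_sub_hedge_le hw (Nat.zero_le c)
    · exact (le_min (fRew_sub_sub_hedge_le hw hk) (fRew_sub_sub_hedge_le hw (by omega))).trans
        (min_le_fRew_insert_sub_fRew_insert hk₀ hvS hvSπ)
  linarith [hedge_le_of_forall_le hw hmin]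

end Hedge

theorem hedgeSum_eq_sum_hedge {U : Type*} [Fintype U] (c : U → ℕ) (w : U → ℕ → ℝ)
    (V Vπ : U → Finset ℕ) : hedgeSum c w V Vπ = ∑ u, hedge (c u) (w u) (V u) (Vπ u) :=
  rfl

section Dynamics

variable {U : Type*} [DecidableEq U]

theorem Vset_zero (x : ℕ → Option U) (u : U) : Vset x u 0 = ∅ := by
  simp [Vset]

theorem Vset_succ (x : ℕ → Option U) (u : U) (v : ℕ) :
    Vset x u (v + 1) = if x (v + 1) = some u then insert (v + 1) (Vset x u v) else Vset x u v := by
  have hIcc : Finset.Icc 1 (v + 1) = insert (v + 1) (Finset.Icc 1 v) :=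
    (Finset.insert_Icc_right_eq_Icc_succ (by simp)).symm
  rw [Vset, Vset, hIcc, Finset.filter_insert]

theorem succ_notMem_Vset (x : ℕ → Option U) (u : U) (v : ℕ) : v + 1 ∉ Vset x u v := by
  simp [Vset]

theorem sum_ite_eq_some [Fintype U] (o : Option U) (f g : U → ℝ) :
    ∑ u, (if o = some u then g u else f u) = ∑ u, f u + o.elim 0 fun u => g u - f u := by
  have hsplit : ∀ u, (if o = some u then g u else f u) =
      f u + if o = some u then g u - f u else 0 := by
    intro u
    split_ifs <;> ring
  simp only [hsplit, Finset.sum_add_distrib, add_right_inj]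
  cases o <;> simp

variable [Fintype U] (c : U → ℕ) (w : U → ℕ → ℝ)

theorem totalRew_zero (x : ℕ → Option U) : totalRew c w x 0 = 0 := by
  simp [totalRew, Vset_zero, fRew_empty]

theorem totalRew_succ (x : ℕ → Option U) (v : ℕ) :
    totalRew c w x (v + 1) = totalRew c w x v + (x (v + 1)).elim 0 fun u =>
      fRew (c u) (w u) (insert (v + 1) (Vset x u v)) - fRew (c u) (w u) (Vset x u v) := by
  simp only [totalRew, Vset_succ, apply_ite, sum_ite_eq_some]

theorem hedgeSum_Vset_zero (x y : ℕ → Option U) :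
    hedgeSum c w (fun u => Vset x u 0) (fun u => Vset y u 0) = 0 := by
  simp [hedgeSum_eq_sum_hedge, Vset_zero, hedge_self]

theorem hedgeSum_Vset_succ_of_eq {x y : ℕ → Option U} {v : ℕ} (hxy : x (v + 1) = y (v + 1)) :
    hedgeSum c w (fun u => Vset x u (v + 1)) (fun u => Vset y u (v + 1)) =
      hedgeSum c w (fun u => Vset x u v) (fun u => Vset y u v) + (y (v + 1)).elim 0 fun u =>
        hedge (c u) (w u) (insert (v + 1) (Vset x u v)) (insert (v + 1) (Vset y u v)) -
          hedge (c u) (w u) (Vset x u v) (Vset y u v) := by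
  have hstep : ∀ u, hedge (c u) (w u) (Vset x u (v + 1)) (Vset y u (v + 1)) =
      if y (v + 1) = some u then
        hedge (c u) (w u) (insert (v + 1) (Vset x u v)) (insert (v + 1) (Vset y u v))
      else hedge (c u) (w u) (Vset x u v) (Vset y u v) := by
    intro u
    rw [Vset_succ, Vset_succ, hxy]
    split_ifs <;> rfl
  simp only [hedgeSum_eq_sum_hedge, hstep, sum_ite_eq_some]

variable (ρ B : ℝ)

def LomarInvariant (x y : ℕ → Option U) (v : ℕ) : Prop :=
  ρ * (totalRew c w y v + hedgeSum c w (fun u => Vset x u v) (fun u => Vset y u v)) - B ≤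
    totalRew c w x v

variable {c w ρ B}

theorem lomarInvariant_zero (hB : 0 ≤ B) (x y : ℕ → Option U) :
    LomarInvariant c w ρ B x y 0 := by
  simp [LomarInvariant, totalRew_zero, hedgeSum_Vset_zero, hB]

theorem lomarInvariant_succ_of_fdCond {xπ : ℕ → U} {x xt : ℕ → Option U} {v : ℕ}
    (hcond : fdCond c w ρ B xπ x xt (v + 1)) (hx : x (v + 1) = xt (v + 1)) :
    LomarInvariant c w ρ B x (fun v' => some (xπ v')) (v + 1) := by
  simp only [fdCond, Nat.add_sub_cancel, ← hx, ← Vset_succ, ← totalRew_succ] at hcond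
  exact hcond

theorem lomarInvariant_succ_of_eq (hw : ∀ u m, 0 ≤ w u m) (hρ₀ : 0 ≤ ρ) (hρ₁ : ρ ≤ 1)
    {x y : ℕ → Option U} {v : ℕ} (hinv : LomarInvariant c w ρ B x y v)
    (hxy : x (v + 1) = y (v + 1)) : LomarInvariant c w ρ B x y (v + 1) := by
  rw [LomarInvariant] at hinv ⊢
  rw [totalRew_succ, totalRew_succ, hedgeSum_Vset_succ_of_eq c w hxy, hxy]
  cases y (v + 1) with
  | none => simpa using hinv
  | some u =>
    have hkey := fRew_insert_sub_add_hedge_le (c := c u) (hw u) (succ_notMem_Vset x u v)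
      (succ_notMem_Vset y u v)
    have hgain := fRew_mono (k := c u) (w u) (Finset.subset_insert (v + 1) (Vset x u v))
    simp only [Option.elim]
    nlinarith [mul_le_mul_of_nonneg_left hkey hρ₀, mul_le_of_le_one_left (sub_nonneg.2 hgain) hρ₁]

theorem le_totalRew_of_lomarInvariant (hρ₀ : 0 ≤ ρ) {x y : ℕ → Option U} {T : ℕ}
    (h : LomarInvariant c w ρ B x y T) : ρ * totalRew c w y T - B ≤ totalRew c w x T := by
  have hG : 0 ≤ hedgeSum c w (fun u => Vset x u T) (fun u => Vset y u T) :=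
    Finset.sum_nonneg fun u _ => hedge_nonneg _ _
  unfold LomarInvariant at h
  linarith [mul_nonneg hρ₀ hG]

end Dynamics

theorem lomar_free_disposal_robustness_general
    {U : Type*} [Fintype U] [DecidableEq U]
    (c : U → ℕ) (T : ℕ) (w : U → ℕ → ℝ)
    (hw : ∀ u v, 0 ≤ w u v)
    (ρ B : ℝ) (hρ₀ : 0 ≤ ρ) (hρ₁ : ρ ≤ 1) (hB : 0 ≤ B)
    (xπ : ℕ → U) (xt x : ℕ → Option U)
    (hfollow : ∀ v, 1 ≤ v → v ≤ T → fdCond c w ρ B xπ x xt v → x v = xt v)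
    (hexpert : ∀ v, 1 ≤ v → v ≤ T → ¬ fdCond c w ρ B xπ x xt v → x v = some (xπ v)) :
    totalRew c w x T ≥ ρ * totalRew c w (fun v' => some (xπ v')) T - B := by
  have hinv : ∀ v ≤ T, LomarInvariant c w ρ B x (fun v' => some (xπ v')) v := by
    intro v
    induction v with
    | zero => exact fun _ => lomarInvariant_zero hB x _
    | succ v ih =>
      intro hv
      by_cases hcond : fdCond c w ρ B xπ x xt (v + 1)
      · exact lomarInvariant_succ_of_fdCond hcond (hfollow (v + 1) (by omega) hv hcond)
      · exact lomarInvariant_succ_of_eq hw hρ₀ hρ₁ (ih (by omega))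
          (hexpert (v + 1) (by omega) hv hcond)
  exact le_totalRew_of_lomarInvariant hρ₀ (hinv T le_rfl)

/-- **LOMAR robustness in the free-disposal setting.**
For every `ρ ∈ [0,1]`, `B ≥ 0`, every expert strategy `x^π` (with `x^π_v ∈ U` for
each `v`), and every sequence of RL suggestions `x̃_v ∈ U ∪ {skip}`, the strategy `x`
produced by LOMAR's free-disposal switching rule has total reward satisfying
`R_T ≥ ρ·R^π_T − B`. -/
theorem lomar_free_disposal_robustness
    {U : Type*} [Fintype U] [DecidableEq U]
    (c : U → ℕ) (hc : ∀ u, 1 ≤ c u) (T : ℕ) (w : U → ℕ → ℝ)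
    (hw : ∀ u v, 0 ≤ w u v)
    (ρ B : ℝ) (hρ₀ : 0 ≤ ρ) (hρ₁ : ρ ≤ 1) (hB : 0 ≤ B)
    (xπ : ℕ → U) (xt x : ℕ → Option U)
    (hfollow : ∀ v, 1 ≤ v → v ≤ T → fdCond c w ρ B xπ x xt v → x v = xt v)
    (hexpert : ∀ v, 1 ≤ v → v ≤ T → ¬ fdCond c w ρ B xπ x xt v → x v = some (xπ v)) :
    totalRew c w x T ≥ ρ * totalRew c w (fun v' => some (xπ v')) T - B :=
  lomar_free_disposal_robustness_general c T w hw ρ B hρ₀ hρ₁ hB xπ xt x hfollow hexpert
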